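/- Let Ω be a nonzero non-atomic measure space, 1 ≤ p < ∞, and let φ be a disintegration of L^p(Ω) with ‖φ(λ)‖_p = 1, whose domain tree is finitely branching at every node that has at least one child with nonzero image. Then for every ε > 0 there exists n such that ‖φ(ν)‖_p < ε for every node ν of length n in the domain of φ. -/

import Mathlib

open MeasureTheory Set
open scoped ENNReal

section Defs

variable {X : Type*} [MeasurableSpace X]

/-- `A` is an atom of the measure `μ`. -/
def MeasureIsAtom (μ : Measure X) (A : Set X) : Prop :=
  MeasurableSet A ∧ 0 < μ A ∧ ∀ B ⊆ A, MeasurableSet B → ¬(0 < μ B ∧ μ B < μ A)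

/-- `f` is a subvector of `g` (`f ⪯ g`). -/
def SubvecL {μ : Measure X} {q : ℝ≥0∞} (f g : Lp ℂ q μ) : Prop :=
  ∀ᵐ t ∂μ, f t ≠ 0 → f t = g t

/-- `f` and `g` are disjointly supported. -/
def DisjSuppL {μ : Measure X} {q : ℝ≥0∞} (f g : Lp ℂ q μ) : Prop :=
  ∀ᵐ t ∂μ, f t * g t = 0

/-- A tree: a set of finite sequences closed under prefixes. -/
def TreeSet (S : Set (List ℕ)) : Prop := ∀ ν ∈ S, ∀ μ' : List ℕ, μ' <+: ν → μ' ∈ S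

/-- `ν'` is a child of `ν`. -/
def NodeChild (ν' ν : List ℕ) : Prop := ∃ n : ℕ, ν' = ν ++ [n]

/-- A disintegration of `L^p(Ω)`. -/
def IsDisintegration (μ : Measure X) (q : ℝ≥0∞) [Fact (1 ≤ q)]
    (S : Set (List ℕ)) (φ : List ℕ → Lp ℂ q μ) : Prop :=
  TreeSet S ∧ S.InjOn φ ∧ (∀ ν ∈ S, φ ν ≠ 0) ∧
  (∀ ν ∈ S, ∀ ν' ∈ S, ν <+: ν' → SubvecL (φ ν') (φ ν)) ∧
  (∀ ν ∈ S, ∀ ν' ∈ S, ¬ ν <+: ν' → ¬ ν' <+: ν → DisjSuppL (φ ν) (φ ν')) ∧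
  (∀ ν ∈ S, (∃ ν' ∈ S, NodeChild ν' ν) →
    HasSum (fun ν' : {ν' // ν' ∈ S ∧ NodeChild ν' ν} => φ ν'.1) (φ ν)) ∧
  Dense (Submodule.span ℂ (φ '' S) : Set (Lp ℂ q μ))

end Defs

/-!
If the norms did not become uniformly small on the levels of the tree, the nodes of norm at
least `ε` would form an infinite, finitely branching subtree, and König's lemma would give an
infinite branch. Along it the images decrease as subvectors, so they converge in `L^p` to a
nonzero common subvector `h`. A node of the tree either lies on the branch, and then agrees with
`h` on the support of `h`, or is disjointly supported from the branch node of the same length,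
and then vanishes there; so on the support of `h` every vector of the span of the range is a
scalar multiple of `h`. By non-atomicity `h` splits into two nonzero disjoint pieces `g` and
`h - g`, and such multiples stay at distance at least `min ‖g‖ ‖h - g‖ / 2` from `g`,
contradicting the density of the span.
-/

open Filter
open scoped Topology

theorem exists_subset_measure_pos_diff_pos {X : Type*} [MeasurableSpace X] {μ : Measure X}
    (hna : ∀ A : Set X, ¬ MeasureIsAtom μ A) {U : Set X} (hU : MeasurableSet U)
    (hμU : 0 < μ U) : ∃ B ⊆ U, MeasurableSet B ∧ 0 < μ B ∧ 0 < μ (U \ B) := by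
  have := hna U
  simp only [MeasureIsAtom, not_and, not_forall, not_not] at this
  obtain ⟨B, hBU, hB, hμB, hlt⟩ := this hU hμU
  refine ⟨B, hBU, hB, hμB, pos_iff_ne_zero.mpr fun hdiff => hlt.not_ge ?_⟩
  calc μ U = μ (B ∪ U \ B) := by rw [union_sdiff_cancel hBU]
    _ ≤ μ B + μ (U \ B) := measure_union_le _ _
    _ = μ B := by rw [hdiff, add_zero]

section Lp

variable {X : Type*} [MeasurableSpace X] {μ : Measure X} {q : ℝ≥0∞} {f g : Lp ℂ q μ}

theorem SubvecL.norm_le (hfg : SubvecL f g) : ‖f‖ ≤ ‖g‖ :=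
  Lp.norm_le_norm_of_ae_le <| hfg.mono fun t ht => by
    by_cases h0 : f t = 0
    · simp [h0]
    · rw [ht h0]

theorem exists_subvecL_ne_zero_ne_self (hna : ∀ A : Set X, ¬ MeasureIsAtom μ A)
    {h : Lp ℂ q μ} (hh : h ≠ 0) : ∃ g : Lp ℂ q μ, SubvecL g h ∧ g ≠ 0 ∧ g ≠ h := by
  set U : Set X := {t | h t ≠ 0}
  have hU : MeasurableSet U :=
    (measurableSet_singleton 0).compl.preimage (Lp.stronglyMeasurable h).measurable
  have hμU : 0 < μ U := by
    rw [pos_iff_ne_zero]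
    rwa [Ne, Lp.eq_zero_iff_ae_eq_zero, EventuallyEq, ae_iff] at hh
  obtain ⟨B, hBU, hB, hμB, hμUB⟩ := exists_subset_measure_pos_diff_pos hna hU hμU
  set g : Lp ℂ q μ := ((Lp.memLp h).indicator hB).toLp _
  have hg : ⇑g =ᵐ[μ] B.indicator h := MemLp.coeFn_toLp _
  refine ⟨g, ?_, fun hg0 => hμB.ne' ?_, fun hgh => hμUB.ne' ?_⟩
  · filter_upwards [hg] with t ht hne
    rw [ht] at hne ⊢
    by_cases htB : t ∈ B
    · rw [indicator_of_mem htB]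
    · exact absurd (indicator_of_notMem htB h) hne
  · rw [measure_eq_zero_iff_ae_notMem]
    filter_upwards [hg, Lp.eq_zero_iff_ae_eq_zero.mp hg0] with t ht ht0 htB
    rw [ht0, indicator_of_mem htB] at ht
    exact hBU htB ht.symm
  · rw [measure_eq_zero_iff_ae_notMem]
    filter_upwards [hg] with t ht htUB
    rw [hgh, indicator_of_notMem htUB.2] at ht
    exact htUB.1 ht

def multiplesOnSupport (h : Lp ℂ q μ) : Submodule ℂ (Lp ℂ q μ) where
  carrier := {f | ∃ c : ℂ, ∀ᵐ t ∂μ, h t ≠ 0 → f t = c * h t}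
  zero_mem' := ⟨0, (Lp.coeFn_zero ℂ q μ).mono fun t ht _ => by rw [ht, zero_mul]; rfl⟩
  add_mem' := by
    rintro f g ⟨c, hc⟩ ⟨d, hd⟩
    refine ⟨c + d, ?_⟩
    filter_upwards [Lp.coeFn_add f g, hc, hd] with t ht hct hdt hne
    rw [ht, Pi.add_apply, hct hne, hdt hne, add_mul]
  smul_mem' := by
    rintro a f ⟨c, hc⟩
    refine ⟨a * c, ?_⟩
    filter_upwards [Lp.coeFn_smul a f, hc] with t ht hct hne
    rw [ht, Pi.smul_apply, hct hne, smul_eq_mul, mul_assoc]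

theorem span_le_multiplesOnSupport {S : Set (List ℕ)} {φ : List ℕ → Lp ℂ q μ}
    (hdisj : ∀ ν ∈ S, ∀ ν' ∈ S, ¬ ν <+: ν' → ¬ ν' <+: ν → DisjSuppL (φ ν) (φ ν'))
    {b : ℕ → List ℕ} (hb : ∀ n, b n ∈ S ∧ (b n).length = n) {h : Lp ℂ q μ}
    (hh : ∀ n, SubvecL h (φ (b n))) :
    Submodule.span ℂ (φ '' S) ≤ multiplesOnSupport h := by
  rw [Submodule.span_le]
  rintro _ ⟨σ, hσ, rfl⟩
  have hb_eq : ∀ᵐ t ∂μ, h t ≠ 0 → φ (b σ.length) t = h t :=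
    (hh σ.length).mono fun t ht hne => (ht hne).symm
  by_cases hσb : σ = b σ.length
  · refine ⟨1, hb_eq.mono fun t ht hne => ?_⟩
    rw [one_mul, hσb, ht hne]
  · have hlen : σ.length = (b σ.length).length := (hb _).2.symm
    refine ⟨0, ?_⟩
    filter_upwards [hdisj σ hσ _ (hb _).1 (fun hp => hσb (hp.eq_of_length hlen))
      (fun hp => hσb (hp.eq_of_length hlen.symm).symm), hb_eq] with t hdt ht hne
    rw [ht hne] at hdt
    simpa [hne] using hdt

variable [Fact (1 ≤ q)]

theorem SubvecL.norm_sub_rpow_add (hq : q ≠ ⊤) (hfg : SubvecL f g) :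
    ‖g - f‖ ^ q.toReal + ‖f‖ ^ q.toReal = ‖g‖ ^ q.toReal := by
  have hq0 : q ≠ 0 := (zero_lt_one.trans_le Fact.out).ne'
  have hr : 0 < q.toReal := ENNReal.toReal_pos hq0 hq
  have hpow : ∀ F : Lp ℂ q μ, eLpNorm F q μ ^ q.toReal = ∫⁻ t, ‖F t‖ₑ ^ q.toReal ∂μ :=
    fun F => by rw [eLpNorm_eq_eLpNorm' hq0 hq, lintegral_rpow_enorm_eq_rpow_eLpNorm' hr]
  have hfin : ∀ F : Lp ℂ q μ, eLpNorm F q μ ^ q.toReal ≠ ⊤ :=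
    fun F => ENNReal.rpow_ne_top_of_nonneg hr.le (Lp.eLpNorm_ne_top F)
  simp only [Lp.norm_def, ENNReal.toReal_rpow]
  rw [← ENNReal.toReal_add (hfin _) (hfin _), hpow, hpow, hpow,
    ← lintegral_add_left' ((Lp.aestronglyMeasurable _).enorm.pow_const _)]
  congr 1
  refine lintegral_congr_ae ?_
  filter_upwards [Lp.coeFn_sub g f, hfg] with t hsub ht
  rw [hsub, Pi.sub_apply]
  by_cases h0 : f t = 0
  · simp [h0, ENNReal.zero_rpow_of_pos hr]
  · simp [← ht h0, ENNReal.zero_rpow_of_pos hr]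

theorem SubvecL.of_tendsto {w : ℕ → Lp ℂ q μ} {h : Lp ℂ q μ} (hlim : Tendsto w atTop (𝓝 h))
    (hw : ∀ n, SubvecL (w n) g) : SubvecL h g := by
  obtain ⟨ns, -, hae⟩ := (tendstoInMeasure_of_tendsto_Lp hlim).exists_seq_tendsto_ae
  filter_upwards [hae, ae_all_iff.mpr hw] with t hconv hsub hne
  have hev : ∀ᶠ i in atTop, w (ns i) t = g t :=
    (hconv.eventually_ne hne).mono fun i hi => hsub (ns i) hi
  exact tendsto_nhds_unique hconv (tendsto_const_nhds.congr' (hev.mono fun _ hi => hi.symm))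

theorem exists_tendsto_of_antitone_subvecL (hq : q ≠ ⊤) {w : ℕ → Lp ℂ q μ}
    (hw : ∀ n m, n ≤ m → SubvecL (w m) (w n)) :
    ∃ h, Tendsto w atTop (𝓝 h) ∧ ∀ n, SubvecL h (w n) := by
  have hr : 0 < q.toReal := ENNReal.toReal_pos (zero_lt_one.trans_le Fact.out).ne' hq
  have hanti : Antitone fun n => ‖w n‖ ^ q.toReal := fun n m hnm =>
    Real.rpow_le_rpow (norm_nonneg _) (hw n m hnm).norm_le hr.le
  obtain ⟨L, hL⟩ : ∃ L, Tendsto (fun n => ‖w n‖ ^ q.toReal) atTop (𝓝 L) :=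
    ⟨_, tendsto_atTop_ciInf hanti ⟨0, by rintro _ ⟨n, rfl⟩; positivity⟩⟩
  have hcauchy : CauchySeq w := by
    refine Metric.cauchySeq_iff'.mpr fun ε hε => ?_
    obtain ⟨N, hN⟩ := (hL.eventually (gt_mem_nhds
      (lt_add_of_pos_right L (Real.rpow_pos_of_pos hε q.toReal)))).exists
    refine ⟨N, fun n hn => ?_⟩
    have hpow : ‖w N - w n‖ ^ q.toReal < ε ^ q.toReal := by
      have := (hw N n hn).norm_sub_rpow_add hq
      linarith [hanti.le_of_tendsto hL n]
    rw [dist_eq_norm, norm_sub_rev]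
    exact (Real.rpow_lt_rpow_iff (norm_nonneg _) hε.le hr).mp hpow
  obtain ⟨h, hlim⟩ := cauchySeq_tendsto_of_complete hcauchy
  refine ⟨h, hlim, fun n => ?_⟩
  exact SubvecL.of_tendsto ((tendsto_add_atTop_iff_nat n).mpr hlim)
    fun k => hw n (k + n) (Nat.le_add_left n k)

theorem min_norm_le_two_mul_norm_sub {f g h : Lp ℂ q μ} (hg : SubvecL g h)
    (hf : f ∈ multiplesOnSupport h) : min ‖g‖ ‖h - g‖ ≤ 2 * ‖f - g‖ := by
  obtain ⟨c, hc⟩ := hf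
  have hg_piece : ‖c - 1‖ * ‖g‖ ≤ ‖f - g‖ := by
    rw [← norm_smul]
    refine Lp.norm_le_norm_of_ae_le ?_
    filter_upwards [Lp.coeFn_smul (c - 1) g, Lp.coeFn_sub f g, hc, hg] with t hs hd hct hgt
    rw [hs, hd, Pi.smul_apply, Pi.sub_apply, smul_eq_mul]
    by_cases h0 : g t = 0
    · simp [h0]
    · rw [hct (hgt h0 ▸ h0), ← hgt h0, sub_one_mul]
  have hrest_piece : ‖c‖ * ‖h - g‖ ≤ ‖f - g‖ := by
    rw [← norm_smul]
    refine Lp.norm_le_norm_of_ae_le ?_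
    filter_upwards [Lp.coeFn_smul c (h - g), Lp.coeFn_sub h g, Lp.coeFn_sub f g, hc, hg]
      with t hs hhg hd hct hgt
    rw [hs, hd, Pi.smul_apply, hhg, Pi.sub_apply, Pi.sub_apply, smul_eq_mul]
    by_cases hg0 : g t = 0
    · by_cases hh0 : h t = 0
      · simp [hh0, hg0]
      · rw [hg0, sub_zero, sub_zero, hct hh0]
    · simp [hgt hg0]
  have hc_sum : 1 ≤ ‖c - 1‖ + ‖c‖ := by
    have := norm_sub_le c (c - 1)
    rwa [sub_sub_cancel, norm_one, add_comm] at this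
  calc min ‖g‖ ‖h - g‖ ≤ (‖c - 1‖ + ‖c‖) * min ‖g‖ ‖h - g‖ :=
        le_mul_of_one_le_left (by positivity) hc_sum
    _ ≤ ‖c - 1‖ * ‖g‖ + ‖c‖ * ‖h - g‖ := by
        rw [add_mul]
        gcongr
        exacts [min_le_left _ _, min_le_right _ _]
    _ ≤ 2 * ‖f - g‖ := by linarith

theorem not_dense_multiplesOnSupport (hna : ∀ A : Set X, ¬ MeasureIsAtom μ A)
    {h : Lp ℂ q μ} (hh : h ≠ 0) : ¬ Dense (multiplesOnSupport h : Set (Lp ℂ q μ)) := by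
  intro hdense
  obtain ⟨g, hg, hg0, hgh⟩ := exists_subvecL_ne_zero_ne_self hna hh
  have hδ : 0 < min ‖g‖ ‖h - g‖ :=
    lt_min (norm_pos_iff.mpr hg0) (norm_pos_iff.mpr (sub_ne_zero.mpr hgh.symm))
  obtain ⟨f, hf, hdist⟩ := Metric.mem_closure_iff.mp (hdense g) _ (half_pos hδ)
  have := min_norm_le_two_mul_norm_sub hg hf
  rw [dist_eq_norm, norm_sub_rev] at hdist
  linarith

end Lp

theorem exists_branch_of_finite_children {T : Set (List ℕ)} (hT : TreeSet T)
    (hfin : ∀ ν ∈ T, {ν' ∈ T | NodeChild ν' ν}.Finite)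
    (hlevel : ∀ n, ∃ ν ∈ T, ν.length = n) :
    ∃ b : ℕ → List ℕ, (∀ n, b n ∈ T ∧ (b n).length = n) ∧ ∀ n m, n ≤ m → b n <+: b m := by
  let level : ℕ → Set (List ℕ) := fun n => {ν | ν ∈ T ∧ ν.length = n}
  have : Finite (level 0) :=
    ((finite_singleton []).subset fun ν hν => List.length_eq_zero_iff.mp hν.2).to_subtype
  have : ∀ n, Nonempty (level n) := fun n =>
    let ⟨ν, hν⟩ := hlevel n
    ⟨⟨ν, hν⟩⟩
  let trunc : {i j : ℕ} → i ≤ j → level j → level i := fun {i _} hij ν =>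
    ⟨ν.1.take i, hT _ ν.2.1 _ (List.take_prefix _ _), by simp [ν.2.2, hij]⟩
  obtain ⟨b, hb⟩ := exists_seq_forall_proj_of_forall_finite trunc
    (fun i ν => Subtype.ext (List.take_of_length_le ν.2.2.le))
    (fun i j k hij hjk ν => Subtype.ext (by simp [trunc, List.take_take, min_eq_left hij]))
    (fun i ν => by
      refine Finite.of_finite_image (f := Subtype.val) ((hfin ν.1 ν.2.1).subset ?_)
        Subtype.val_injective.injOn
      rintro _ ⟨c, hc, rfl⟩
      refine ⟨c.2.1, c.1[i]'(by rw [c.2.2]; omega), ?_⟩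
      rw [← congrArg Subtype.val hc, List.take_concat_get',
        List.take_of_length_le c.2.2.le])
  refine ⟨fun n => (b n).1, fun n => (b n).2, fun n m hnm => ?_⟩
  simpa only [← hb hnm] using List.take_prefix n (b m).1

theorem stmt16_general {X : Type*} [MeasurableSpace X] (μ : Measure X)
    (hna : ∀ A : Set X, ¬ MeasureIsAtom μ A)
    (p : ℝ) [Fact (1 ≤ ENNReal.ofReal p)]
    (S : Set (List ℕ)) (φ : List ℕ → Lp ℂ (ENNReal.ofReal p) μ)
    (hφ : IsDisintegration μ (ENNReal.ofReal p) S φ)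
    -- the domain tree is finitely branching at every node having a child with
    -- nonzero image:
    (hfb : ∀ ν ∈ S, (∃ ν' ∈ S, NodeChild ν' ν ∧ φ ν' ≠ 0) →
      {ν' ∈ S | NodeChild ν' ν}.Finite) :
    ∀ ε : ℝ, 0 < ε → ∃ n : ℕ, ∀ ν ∈ S, ν.length = n → ‖φ ν‖ < ε := by
  intro ε hε
  by_contra! hlarge
  obtain ⟨hS, -, hne, hanti, hdisj, -, hdense⟩ := hφ
  set T : Set (List ℕ) := {ν | ν ∈ S ∧ ε ≤ ‖φ ν‖}
  have hT : TreeSet T := fun ν hν ρ hρ =>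
    ⟨hS ν hν.1 ρ hρ, hν.2.trans (hanti ρ (hS ν hν.1 ρ hρ) ν hν.1 hρ).norm_le⟩
  have hfinT : ∀ ν ∈ T, {ν' ∈ T | NodeChild ν' ν}.Finite := by
    intro ν hν
    rcases eq_empty_or_nonempty {ν' ∈ T | NodeChild ν' ν} with hempty | ⟨c, hcT, hc⟩
    · exact hempty ▸ finite_empty
    · exact (hfb ν hν.1 ⟨c, hcT.1, hc, hne c hcT.1⟩).subset fun ν' h' => ⟨h'.1.1, h'.2⟩
  obtain ⟨b, hb, hbpre⟩ := exists_branch_of_finite_children hT hfinT fun n =>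
    let ⟨ν, hνS, hlen, hν⟩ := hlarge n
    ⟨ν, ⟨hνS, hν⟩, hlen⟩
  obtain ⟨h, hlim, hsub⟩ := exists_tendsto_of_antitone_subvecL ENNReal.ofReal_ne_top
    fun n m hnm => hanti _ (hb n).1.1 _ (hb m).1.1 (hbpre n m hnm)
  have hh : h ≠ 0 := by
    rintro rfl
    have := ge_of_tendsto hlim.norm (Eventually.of_forall fun n => (hb n).1.2)
    rw [norm_zero] at this
    linarith
  exact not_dense_multiplesOnSupport hna hh <| hdense.mono <|
    span_le_multiplesOnSupport hdisj (fun n => ⟨(hb n).1.1, (hb n).2⟩) hsub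

theorem stmt16 {X : Type*} [MeasurableSpace X] (μ : Measure X)
    -- `Ω` is nonzero and non-atomic:
    (hnz : ∃ A : Set X, MeasurableSet A ∧ 0 < μ A ∧ μ A < ⊤)
    (hna : ∀ A : Set X, ¬ MeasureIsAtom μ A)
    (p : ℝ) (hp : 1 ≤ p) [Fact (1 ≤ ENNReal.ofReal p)]
    (S : Set (List ℕ)) (φ : List ℕ → Lp ℂ (ENNReal.ofReal p) μ)
    (hφ : IsDisintegration μ (ENNReal.ofReal p) S φ)
    (hroot : ‖φ []‖ = 1)
    -- the domain tree is finitely branching at every node having a child with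
    -- nonzero image:
    (hfb : ∀ ν ∈ S, (∃ ν' ∈ S, NodeChild ν' ν ∧ φ ν' ≠ 0) →
      {ν' ∈ S | NodeChild ν' ν}.Finite) :
    ∀ ε : ℝ, 0 < ε → ∃ n : ℕ, ∀ ν ∈ S, ν.length = n → ‖φ ν‖ < ε :=
  stmt16_general μ hna p S φ hφ hfb
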